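/- arXiv:2508.17591 — 3 statements merged into one kernel-verified Lean document; each statement's English description precedes it below -/
import Mathlib

section
/- There exists a universal constant c ∈ (0,1) such that for all natural numbers n, t with 1 ≤ n ≤ t-1, we have (t - n)/(√(t·log(t+1)) - √(n·log(n+1))) - √(n/log(n+1)) > c·√(t/log(t+1)). -/
set_option maxHeartbeats 1000000

/-- Core polynomial inequality for the n ≥ 2 case. -/
lemma core_poly (A B : ℝ) (hA : 13/12 < A) (hAB : A < B) :
    (B - A/25)^2 < (576/625) * ((1 + (B-A)/2)^2) * A * B := by
  nlinarith [mul_nonneg (mul_nonneg (sub_nonneg.mpr hA.le) (sub_nonneg.mpr hAB.le)) (by nlinarith : (0:ℝ) ≤ B),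
    mul_nonneg (mul_nonneg (sub_nonneg.mpr hA.le) (sq_nonneg (B-A))) (by nlinarith : (0:ℝ) ≤ B),
    mul_nonneg (sq_nonneg (B-A)) (by nlinarith : (0:ℝ) ≤ B - 13/12),
    sq_nonneg (B-A)]

/-- log 3 > 13/12 -/
lemma log3_gt : 13/12 < Real.log 3 := by
  have h9 : Real.log 9 = 2 * Real.log 3 := by
    rw [show (9:ℝ) = 3^2 by norm_num, Real.log_pow]; push_cast; ring
  have h8 : Real.log 8 = 3 * Real.log 2 := by
    rw [show (8:ℝ) = 2^3 by norm_num, Real.log_pow]; push_cast; ring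
  have h98 : Real.log 9 = Real.log 8 + Real.log (9/8) := by
    rw [← Real.log_mul (by norm_num) (by norm_num)]; norm_num
  have h1 : Real.log (8/9) ≤ 8/9 - 1 := Real.log_le_sub_one_of_pos (by norm_num)
  have h2 : Real.log (8/9) = - Real.log (9/8) := by
    rw [show (8:ℝ)/9 = ((9:ℝ)/8)⁻¹ by norm_num, Real.log_inv]
  have hl2 := Real.log_two_gt_d9
  nlinarith

theorem stmt0 :
    ∃ c : ℝ, 0 < c ∧ c < 1 ∧
      ∀ n t : ℕ, 1 ≤ n → n ≤ t - 1 →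
        ((t : ℝ) - (n : ℝ)) /
            (Real.sqrt ((t : ℝ) * Real.log ((t : ℝ) + 1)) -
              Real.sqrt ((n : ℝ) * Real.log ((n : ℝ) + 1))) -
          Real.sqrt ((n : ℝ) / Real.log ((n : ℝ) + 1)) >
        c * Real.sqrt ((t : ℝ) / Real.log ((t : ℝ) + 1)) := by
  refine ⟨1/25, by norm_num, by norm_num, ?_⟩
  intro n t hn hnt
  have hnt' : n + 1 ≤ t := by omega
  have hN1' : (1:ℝ) ≤ (n:ℝ) := by exact_mod_cast hn
  have hNT' : (n:ℝ) + 1 ≤ (t:ℝ) := by exact_mod_cast hnt'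
  set N : ℝ := (n : ℝ) with hN
  set T : ℝ := (t : ℝ) with hT
  have hN1 : (1:ℝ) ≤ N := hN1'
  have hNT : N + 1 ≤ T := hNT'
  have hN0 : (0:ℝ) < N := by linarith
  have hT0 : (0:ℝ) < T := by linarith
  set Ln : ℝ := Real.log (N + 1) with hLn
  set Lt : ℝ := Real.log (T + 1) with hLt
  have hLn0 : 0 < Ln := Real.log_pos (by linarith)
  have hLtLn : Ln < Lt := Real.log_lt_log (by linarith) (by linarith)
  have hLt0 : 0 < Lt := lt_trans hLn0 hLtLn
  -- the star inequality
  have star : N * (Lt - Ln/25)^2 < (576/625) * T * Lt * Ln := by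
    rcases eq_or_lt_of_le hN1 with h1 | h2
    · -- n = 1 : Ln = log 2
      have hNe1 : N = 1 := h1.symm
      have hLn2 : Ln = Real.log 2 := by rw [hLn, hNe1]; norm_num
      have hT2 : (2:ℝ) ≤ T := by rw [hNe1] at hNT; linarith
      have l3 : Real.log 3 ≤ Real.log 2 + 1/2 := by
        have : Real.log 3 = Real.log 2 + Real.log (3/2) := by
          rw [← Real.log_mul (by norm_num) (by norm_num)]; norm_num
        have h32 : Real.log (3/2) ≤ 3/2 - 1 := Real.log_le_sub_one_of_pos (by norm_num)
        linarith
      have lT : Lt ≤ Real.log 3 + ((T+1)/3 - 1) := by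
        have he : Lt = Real.log 3 + Real.log ((T+1)/3) := by
          rw [hLt, ← Real.log_mul (by norm_num) (by positivity)]
          congr 1
          field_simp
        have h := Real.log_le_sub_one_of_pos (show (0:ℝ) < (T+1)/3 by linarith)
        linarith
      have l2lo : (0.6931:ℝ) < Real.log 2 := by
        have := Real.log_two_gt_d9; linarith
      have l2hi : Real.log 2 < 0.6932 := by
        have := Real.log_two_lt_d9; linarith
      have hTlog : Lt < (576/625) * Real.log 2 * T := by
        nlinarith [mul_nonneg (by linarith : (0:ℝ) ≤ T - 2) (by linarith : (0:ℝ) ≤ Real.log 2 - 0.6931)]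
      have hpos : 0 < Lt - Ln/25 := by nlinarith
      have hlt : Lt - Ln/25 < Lt := by nlinarith
      rw [hNe1, hLn2]
      nlinarith [hTlog, hLt0, hpos, hlt]
    · -- n ≥ 2
      have hA : 13/12 < Ln := by
        have h3 : Real.log 3 ≤ Ln := by
          apply Real.log_le_log (by norm_num)
          have hnn : (2:ℝ) ≤ N := by
            have : (1:ℝ) < (n:ℝ) := h2
            have : 1 < n := by exact_mod_cast this
            have : (2:ℕ) ≤ n := this
            calc (2:ℝ) ≤ (n:ℝ) := by exact_mod_cast this
              _ = N := rfl
          linarith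
        linarith [log3_gt]
      -- T ≥ N * exp(Lt - Ln)
      have hexp : Real.exp (Lt - Ln) = (T+1)/(N+1) := by
        rw [Real.exp_sub, hLt, hLn, Real.exp_log (by linarith), Real.exp_log (by linarith)]
      have hTex : N * Real.exp (Lt - Ln) ≤ T := by
        rw [hexp, ← mul_div_assoc, div_le_iff₀ (by linarith : (0:ℝ) < N + 1)]
        nlinarith
      have hexp2 : (1 + (Lt - Ln)/2)^2 ≤ Real.exp (Lt - Ln) := by
        have h := Real.add_one_le_exp ((Lt - Ln)/2)
        have hnn : 0 ≤ 1 + (Lt - Ln)/2 := by linarith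
        have : Real.exp ((Lt-Ln)/2) ^ 2 = Real.exp (Lt - Ln) := by
          rw [← Real.exp_nat_mul]; congr 1; push_cast; ring
        nlinarith
      have hcore := core_poly Ln Lt hA hLtLn
      have hNs : N * (1 + (Lt - Ln)/2)^2 ≤ T :=
        le_trans (by nlinarith) hTex
      calc N * (Lt - Ln/25)^2
          < N * ((576/625) * ((1 + (Lt-Ln)/2)^2) * Ln * Lt) := by
            apply mul_lt_mul_of_pos_left hcore hN0
        _ = (576/625) * (N * (1 + (Lt-Ln)/2)^2) * Lt * Ln := by ring
        _ ≤ (576/625) * T * Lt * Ln := by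
            have := mul_le_mul_of_nonneg_right
              (mul_le_mul_of_nonneg_right
                (mul_le_mul_of_nonneg_left hNs (by norm_num : (0:ℝ) ≤ 576/625)) hLt0.le) hLn0.le
            linarith
  -- set up sqrt quantities
  set a : ℝ := Real.sqrt (T * Lt) with ha
  set b : ℝ := Real.sqrt (N * Ln) with hb
  have ha0 : 0 < a := Real.sqrt_pos.mpr (by positivity)
  have hb0 : 0 < b := Real.sqrt_pos.mpr (by positivity)
  have ha2 : a^2 = T * Lt := Real.sq_sqrt (by positivity)
  have hb2 : b^2 = N * Ln := Real.sq_sqrt (by positivity)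
  have hba : b < a := by
    rw [ha, hb]
    apply Real.sqrt_lt_sqrt (by positivity)
    nlinarith
  -- key: (24/25) a b > N (Lt - Ln/25)
  have key : N * (Lt - Ln/25) < (24/25) * (a * b) := by
    have hsq : (N * (Lt - Ln/25))^2 < ((24/25) * (a * b))^2 := by
      have : ((24/25) * (a*b))^2 = (576/625) * (T*Lt) * (N*Ln) := by
        rw [mul_pow, mul_pow, ha2, hb2]; ring
      rw [this]
      nlinarith [star, hN0]
    exact lt_of_pow_lt_pow_left₀ 2 (by positivity) hsq
  -- rewrite sqrt(N/Ln) = N / b and sqrt(T/Lt) = T / a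
  have e1 : Real.sqrt (N / Ln) = N / b := by
    rw [eq_div_iff hb0.ne', hb, ← Real.sqrt_mul (by positivity)]
    rw [show N / Ln * (N * Ln) = N^2 by field_simp]
    exact Real.sqrt_sq hN0.le
  have e2 : Real.sqrt (T / Lt) = T / a := by
    rw [eq_div_iff ha0.ne', ha, ← Real.sqrt_mul (by positivity)]
    rw [show T / Lt * (T * Lt) = T^2 by field_simp]
    exact Real.sqrt_sq hT0.le
  rw [e1, e2, gt_iff_lt, lt_sub_iff_add_lt, lt_div_iff₀ (by linarith : (0:ℝ) < a - b)]
  have hX : (1/25 * (T/a) + N/b) = (1/25 * T * b + N * a) / (a * b) := by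
    field_simp
  rw [hX, div_mul_eq_mul_div, div_lt_iff₀ (by positivity)]
  nlinarith [mul_lt_mul_of_pos_left key hT0, ha2, hb2]
end

section
/- Define a sequence of positive integers by t_1 = 1 and t_{n+1} = t_n + ⌈log(t_n + 1)⌉. Let T(k) = {t_n : n ∈ ℕ⁺} ∩ {1,...,k}. Then |T(k)| · (log k)/k → 1 as k → ∞. -/
open Filter Real Asymptotics

/-!
Each step adds `⌈log (t n + 1)⌉`, which yields `n (log n - 1) ≤ t n` and, since the increments
only grow, the implicit bound `t n ≤ n (log (t n + 1) + 1)`; bootstrapping the latter through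
`log y ≤ y / 2` gives `t n ≤ n log n + O(n log log n)`. Hence `t n ~ n log n` and
`t (n + 1) ~ t n`. The count `|T(k)|` is the last index `N` with `t N ≤ k < t (N + 1)`, so
`k ~ N log N`, whence `log k ~ log N` and `N log k ~ k`.
-/

lemma log_le_half_self {y : ℝ} (hy : 0 < y) : log y ≤ y / 2 := by
  rw [log_le_iff_le_exp hy]
  nlinarith [exp_one_mul_le_exp (x := y / 2), exp_one_gt_two]

lemma mul_log_add_one_sub_log_le_one {x : ℝ} (hx : 0 < x) : x * (log (x + 1) - log x) ≤ 1 := by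
  have h := log_le_sub_one_of_pos (div_pos (by linarith) hx : 0 < (x + 1) / x)
  rw [log_div (by linarith) hx.ne'] at h
  calc x * (log (x + 1) - log x) ≤ x * ((x + 1) / x - 1) := by gcongr
    _ = 1 := by field_simp; ring

lemma le_mul_log_of_le_mul_log_add_one {n x : ℝ} (hn : 1 ≤ n) (hx : 0 ≤ x)
    (h : x ≤ n * (log (x + 1) + 1)) : x ≤ n * (log n + (log (log n + 2) + 2)) := by
  set L := log (x + 1)
  have hL : 0 ≤ L := log_nonneg (by linarith)
  have hlogn : 0 ≤ log n := log_nonneg hn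
  have hL_le : L ≤ log n + log (L + 2) := by
    rw [← log_mul (by positivity) (by positivity)]
    exact log_le_log (by positivity) (by nlinarith)
  have hL_le' : L + 2 ≤ 2 * (log n + 2) := by
    linarith [log_le_half_self (by positivity : 0 < L + 2)]
  have hlogL : log (L + 2) ≤ 1 + log (log n + 2) :=
    calc log (L + 2) ≤ log (2 * (log n + 2)) := log_le_log (by positivity) hL_le'
      _ = log 2 + log (log n + 2) := log_mul (by norm_num) (by positivity)
      _ ≤ 1 + log (log n + 2) := by linarith [log_two_lt_d9]
  calc x ≤ n * (L + 1) := h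
    _ ≤ n * (log n + (log (log n + 2) + 2)) :=
      mul_le_mul_of_nonneg_left (by linarith) (by linarith)

lemma isLittleO_log_add_const_add_const (a b : ℝ) :
    (fun y => log (y + a) + b) =o[atTop] id := by
  have hlog : (fun y => log (y + a)) =o[atTop] fun y => y + a :=
    isLittleO_log_id_atTop.comp_tendsto (tendsto_atTop_add_const_right _ a tendsto_id)
  have hlin : (fun y : ℝ => y + a) =O[atTop] id :=
    (isBigO_refl id atTop).add (isLittleO_const_id_atTop a).isBigO
  exact (hlog.trans_isBigO hlin).add (isLittleO_const_id_atTop b)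

lemma isEquivalent_log_mul_log : (fun x => log (x * log x)) ~[atTop] log := by
  have hloglog : (fun x => log (log x)) =o[atTop] log :=
    isLittleO_log_id_atTop.comp_tendsto tendsto_log_atTop
  refine (IsEquivalent.refl.add_isLittleO hloglog).congr_left ?_
  filter_upwards [eventually_gt_atTop 1] with x hx
  rw [Pi.add_apply, log_mul (by linarith) (log_pos hx).ne']

lemma Asymptotics.IsEquivalent.of_le_of_le {α : Type*} {l : Filter α} {f g h u : α → ℝ}
    (hg : g ~[l] u) (hh : h ~[l] u) (hgf : g ≤ᶠ[l] f) (hfh : f ≤ᶠ[l] h) : f ~[l] u := by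
  rw [IsEquivalent, isLittleO_iff] at hg hh ⊢
  intro c hc
  filter_upwards [hg hc, hh hc, hgf, hfh] with x hgx hhx hgfx hfhx
  simp only [Pi.sub_apply, Real.norm_eq_abs, abs_le] at hgx hhx ⊢
  constructor <;> linarith

def CeilLogStep (t : ℕ → ℕ) : Prop :=
  ∀ n, 1 ≤ n → t (n + 1) = t n + ⌈log ((t n : ℝ) + 1)⌉₊

-- The search may stop at `k` because `n ≤ t n`.
def lastIndexLE (t : ℕ → ℕ) (k : ℕ) : ℕ :=
  Nat.findGreatest (fun n => t n ≤ k) k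

lemma apply_lastIndexLE_le {t : ℕ → ℕ} (ht1 : t 1 = 1) {k : ℕ} (hk : 1 ≤ k) :
    t (lastIndexLE t k) ≤ k :=
  Nat.findGreatest_spec (P := fun n => t n ≤ k) hk (by rwa [ht1])

namespace CeilLogStep

variable {t : ℕ → ℕ}

lemma apply_add_log_le (hrec : CeilLogStep t) {n : ℕ} (hn : 1 ≤ n) :
    (t n : ℝ) + log (t n + 1) ≤ t (n + 1) := by
  rw [hrec n hn]
  push_cast
  gcongr
  exact Nat.le_ceil _

lemma apply_succ_le (hrec : CeilLogStep t) {n : ℕ} (hn : 1 ≤ n) :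
    (t (n + 1) : ℝ) ≤ t n + (log (t n + 1) + 1) := by
  rw [hrec n hn]
  push_cast
  have := Nat.ceil_lt_add_one (log_nonneg (by linarith [(t n).cast_nonneg (α := ℝ)] :
    (1 : ℝ) ≤ t n + 1))
  linarith

lemma apply_lt_apply_succ_of_pos (hrec : CeilLogStep t) {n : ℕ} (hn : 1 ≤ n) (htn : 0 < t n) :
    t n < t (n + 1) := by
  have : 0 < ⌈log ((t n : ℝ) + 1)⌉₊ :=
    Nat.ceil_pos.2 (log_pos (by simpa using htn))
  rw [hrec n hn]
  omega

lemma self_le_apply (hrec : CeilLogStep t) (ht1 : t 1 = 1) {n : ℕ} (hn : 1 ≤ n) : n ≤ t n := by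
  induction n, hn using Nat.le_induction with
  | base => rw [ht1]
  | succ p hp ih => exact apply_lt_apply_succ_of_pos hrec hp (by omega) |>.trans_le' ih

lemma apply_lt_apply_succ (hrec : CeilLogStep t) (ht1 : t 1 = 1) {n : ℕ} (hn : 1 ≤ n) :
    t n < t (n + 1) :=
  apply_lt_apply_succ_of_pos hrec hn (hn.trans (self_le_apply hrec ht1 hn))

lemma strictMonoOn (hrec : CeilLogStep t) (ht1 : t 1 = 1) : StrictMonoOn t (Set.Ici 1) :=
  strictMonoOn_of_lt_add_one Set.ordConnected_Ici fun _ _ hn _ => apply_lt_apply_succ hrec ht1 hn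

lemma mul_log_sub_one_le (hrec : CeilLogStep t) (ht1 : t 1 = 1) {n : ℕ} (hn : 1 ≤ n) :
    (n : ℝ) * (log n - 1) ≤ t n := by
  induction n, hn using Nat.le_induction with
  | base => simpa using neg_one_lt_zero.le.trans (t 1).cast_nonneg
  | succ p hp ih =>
    have hp' : (0 : ℝ) < p := by exact_mod_cast hp
    have hlog : log (p + 1) ≤ log (t p + 1) := by
      gcongr
      exact_mod_cast self_le_apply hrec ht1 hp
    have hdiff := mul_log_add_one_sub_log_le_one hp'
    have hstep := apply_add_log_le hrec hp
    push_cast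
    linarith

lemma apply_le_mul_log_apply (hrec : CeilLogStep t) (ht1 : t 1 = 1) {n : ℕ} (hn : 1 ≤ n) :
    (t n : ℝ) ≤ n * (log (t n + 1) + 1) := by
  induction n, hn using Nat.le_induction with
  | base => simp [ht1, log_nonneg (by norm_num : (1 : ℝ) ≤ 1 + 1)]
  | succ p hp ih =>
    have hlog : log (t p + 1) ≤ log (t (p + 1) + 1) := by
      gcongr
      exact_mod_cast (apply_lt_apply_succ hrec ht1 hp).le
    have hstep := apply_succ_le hrec hp
    push_cast
    nlinarith

lemma apply_le (hrec : CeilLogStep t) (ht1 : t 1 = 1) {n : ℕ} (hn : 1 ≤ n) :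
    (t n : ℝ) ≤ n * (log n + (log (log n + 2) + 2)) :=
  le_mul_log_of_le_mul_log_add_one (by exact_mod_cast hn) (by positivity)
    (apply_le_mul_log_apply hrec ht1 hn)

lemma tendsto_atTop (hrec : CeilLogStep t) (ht1 : t 1 = 1) :
    Tendsto (fun n => (t n : ℝ)) atTop atTop :=
  tendsto_atTop_mono' _ (by
    filter_upwards [eventually_ge_atTop 1] with n hn
    exact_mod_cast self_le_apply hrec ht1 hn) tendsto_natCast_atTop_atTop

lemma isEquivalent (hrec : CeilLogStep t) (ht1 : t 1 = 1) :
    (fun n => (t n : ℝ)) ~[atTop] fun n => n * log n := by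
  have hlo : (fun x : ℝ => x * (log x - 1)) ~[atTop] fun x => x * log x :=
    IsEquivalent.refl.mul (IsEquivalent.refl.sub_isLittleO isLittleO_const_log_atTop)
  have hhi : (fun x : ℝ => x * (log x + (log (log x + 2) + 2))) ~[atTop] fun x => x * log x :=
    IsEquivalent.refl.mul (IsEquivalent.refl.add_isLittleO
      ((isLittleO_log_add_const_add_const 2 2).comp_tendsto tendsto_log_atTop))
  refine (hlo.comp_tendsto tendsto_natCast_atTop_atTop).of_le_of_le
    (hhi.comp_tendsto tendsto_natCast_atTop_atTop) ?_ ?_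
  all_goals filter_upwards [eventually_ge_atTop 1] with n hn
  · exact mul_log_sub_one_le hrec ht1 hn
  · exact apply_le hrec ht1 hn

lemma isEquivalent_apply_succ (hrec : CeilLogStep t) (ht1 : t 1 = 1) :
    (fun n => (t (n + 1) : ℝ)) ~[atTop] fun n => (t n : ℝ) := by
  have hhi : (fun n => (t n : ℝ) + (log (t n + 1) + 1)) ~[atTop] fun n => (t n : ℝ) :=
    IsEquivalent.refl.add_isLittleO
      ((isLittleO_log_add_const_add_const 1 1).comp_tendsto (tendsto_atTop hrec ht1))
  refine IsEquivalent.refl.of_le_of_le hhi ?_ ?_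
  all_goals filter_upwards [eventually_ge_atTop 1] with n hn
  · exact_mod_cast (apply_lt_apply_succ hrec ht1 hn).le
  · exact apply_succ_le hrec hn

lemma lt_apply_lastIndexLE_succ (hrec : CeilLogStep t) (ht1 : t 1 = 1) (k : ℕ) :
    k < t (lastIndexLE t k + 1) := by
  by_contra! h
  have hle : lastIndexLE t k + 1 ≤ k := (self_le_apply hrec ht1 (by omega)).trans h
  exact Nat.findGreatest_is_greatest (Nat.lt_succ_self _) hle h

lemma le_lastIndexLE (hrec : CeilLogStep t) (ht1 : t 1 = 1) {n k : ℕ} (hn : 1 ≤ n)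
    (hk : t n ≤ k) : n ≤ lastIndexLE t k :=
  Nat.le_findGreatest ((self_le_apply hrec ht1 hn).trans hk) hk

lemma tendsto_lastIndexLE (hrec : CeilLogStep t) (ht1 : t 1 = 1) :
    Tendsto (lastIndexLE t) atTop atTop :=
  tendsto_atTop_atTop.2 fun b => ⟨t (max b 1), fun _ hk =>
    (le_max_left b 1).trans (le_lastIndexLE hrec ht1 (le_max_right b 1) hk)⟩

lemma ncard_range_inter_Icc (hrec : CeilLogStep t) (ht1 : t 1 = 1) {k : ℕ} (hk : 1 ≤ k) :
    ({j | ∃ n, 1 ≤ n ∧ t n = j} ∩ Set.Icc 1 k).ncard = lastIndexLE t k := by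
  have hmono := strictMonoOn hrec ht1
  have hset : {j | ∃ n, 1 ≤ n ∧ t n = j} ∩ Set.Icc 1 k = t '' Set.Icc 1 (lastIndexLE t k) := by
    ext j
    constructor
    · rintro ⟨⟨n, hn, rfl⟩, -, hnk⟩
      exact ⟨n, ⟨hn, le_lastIndexLE hrec ht1 hn hnk⟩, rfl⟩
    · rintro ⟨n, ⟨hn, hnN⟩, rfl⟩
      refine ⟨⟨n, hn, rfl⟩, hn.trans (self_le_apply hrec ht1 hn), ?_⟩
      exact (hmono.monotoneOn hn (hn.trans hnN) hnN).trans (apply_lastIndexLE_le ht1 hk)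
  rw [hset, (hmono.injOn.mono fun n hn => hn.1).ncard_image, Set.ncard_Icc_nat,
    Nat.add_sub_cancel]

lemma isEquivalent_lastIndexLE (hrec : CeilLogStep t) (ht1 : t 1 = 1) :
    (fun k : ℕ => (k : ℝ)) ~[atTop] fun k => (lastIndexLE t k : ℝ) * log (lastIndexLE t k) := by
  have hN := tendsto_lastIndexLE hrec ht1
  have hsqueeze : (fun k : ℕ => (k : ℝ)) ~[atTop] fun k => (t (lastIndexLE t k) : ℝ) := by
    refine IsEquivalent.refl.of_le_of_le ((isEquivalent_apply_succ hrec ht1).comp_tendsto hN) ?_ ?_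
    all_goals filter_upwards [eventually_ge_atTop 1] with k hk
    · exact_mod_cast apply_lastIndexLE_le ht1 hk
    · exact Nat.cast_le (α := ℝ) |>.2 (lt_apply_lastIndexLE_succ hrec ht1 k).le
  exact hsqueeze.trans ((isEquivalent hrec ht1).comp_tendsto hN)

end CeilLogStep

theorem stmt3 (t : ℕ → ℕ) (ht1 : t 1 = 1)
    (hrec : ∀ n, 1 ≤ n → t (n + 1) = t n + ⌈Real.log ((t n : ℝ) + 1)⌉₊) :
    Tendsto
      (fun k : ℕ =>
        ((({j | ∃ n, 1 ≤ n ∧ t n = j} ∩ Set.Icc 1 k).ncard : ℝ) * Real.log k) / k)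
      atTop (nhds 1) := by
  have hrec : CeilLogStep t := hrec
  set N := lastIndexLE t
  have hN : Tendsto (fun k => (N k : ℝ)) atTop atTop :=
    tendsto_natCast_atTop_atTop.comp (hrec.tendsto_lastIndexLE ht1)
  have hk := hrec.isEquivalent_lastIndexLE ht1
  have hlog : (fun k : ℕ => log (k : ℝ)) ~[atTop] fun k => log (N k : ℝ) :=
    (hk.log (hN.atTop_mul_atTop₀ (tendsto_log_atTop.comp hN))).trans
      (isEquivalent_log_mul_log.comp_tendsto hN)
  have hmain : (fun k => (N k : ℝ) * log k) ~[atTop] fun k => (k : ℝ) :=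
    (IsEquivalent.refl.mul hlog).trans hk.symm
  rw [isEquivalent_iff_tendsto_one (by simpa using eventually_ne_atTop (0 : ℕ))] at hmain
  refine hmain.congr' ?_
  filter_upwards [eventually_ge_atTop 1] with k hk
  rw [hrec.ncard_range_inter_Icc ht1 hk]
  rfl
end

section
/- Let (M_n) be real random variables adapted to a filtration (F_n), and fix λ ∈ ℕ⁺ and C > 0. Then P(max_{1≤n≤λ} M_n ≥ C) ≤ (1/C)·E(max(M_λ, 0)) + (1/C)·∑_{n=1}^{λ-1} √(E M_n²)·√(P(E(M_λ | F_n) < M_n)), provided each M_n is square-integrable and nonnegative on the event {M_n ≥ C}. -/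
/-!
Let `τ` be the first time in `[1, λ]` at which `M` enters `[C, ∞)` and `Aₙ = {τ = n, C ≤ Mₙ}`.
These events are disjoint, `Aₙ ∈ Fₙ`, and they cover `{max Mₙ ≥ C}`; Markov gives
`C P(Aₙ) ≤ E[Mₙ; Aₙ]`. On `Aₙ ∩ {Mₙ ≤ E(M_λ | Fₙ)}` the tower property bounds `E[Mₙ; ·]` by
`E[M_λ⁺; ·]`, and these pieces add up to at most `E M_λ⁺`; on the complement Cauchy–Schwarz gives
`√(E Mₙ²) √P(E(M_λ | Fₙ) < Mₙ)`, a term that vanishes for `n = λ`.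
-/

open MeasureTheory

theorem Finset.sum_Icc_sub_one_right_of_eq_zero {R : Type*} [AddCommMonoid R] (f : ℕ → R)
    {a b : ℕ} (hb : f b = 0) : ∑ n ∈ Icc a b, f n = ∑ n ∈ Icc a (b - 1), f n := by
  refine (sum_subset (Icc_subset_Icc_right (Nat.sub_le b 1)) fun n hn hn' => ?_).symm
  obtain rfl : n = b := by simp only [mem_Icc] at hn hn'; omega
  exact hb

section

variable {Ω : Type*} {m m0 : MeasurableSpace Ω} {μ : Measure Ω}

theorem setIntegral_abs_le_sqrt_integral_sq_mul_sqrt [IsFiniteMeasure μ] {f : Ω → ℝ}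
    (hf : MemLp f 2 μ) (s : Set Ω) :
    ∫ x in s, |f x| ∂μ ≤ √(∫ x, f x ^ 2 ∂μ) * √(μ.real s) := by
  have hf' : MemLp (fun x => |f x|) (ENNReal.ofReal 2) (μ.restrict s) := by
    simpa [Real.norm_eq_abs] using hf.norm.restrict s
  have hone : MemLp (fun _ => (1 : ℝ)) (ENNReal.ofReal 2) (μ.restrict s) := memLp_const 1
  have holder := integral_mul_le_Lp_mul_Lq_of_nonneg Real.HolderConjugate.two_two
    (ae_of_all _ fun x => abs_nonneg (f x)) (ae_of_all _ fun _ => zero_le_one) hf' hone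
  simp only [mul_one, one_pow, Real.rpow_two, sq_abs, setIntegral_const, smul_eq_mul,
    ← Real.sqrt_eq_rpow] at holder
  calc ∫ x in s, |f x| ∂μ ≤ √(∫ x in s, f x ^ 2 ∂μ) * √(μ.real s) := holder
    _ ≤ √(∫ x, f x ^ 2 ∂μ) * √(μ.real s) := mul_le_mul_of_nonneg_right
        (Real.sqrt_le_sqrt (setIntegral_le_integral hf.integrable_sq
          (ae_of_all _ fun x => sq_nonneg (f x)))) (Real.sqrt_nonneg _)

theorem setIntegral_le_setIntegral_of_le_condExp (hm : m ≤ m0) [SigmaFinite (μ.trim hm)]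
    {f g : Ω → ℝ} {s : Set Ω} (hf : Integrable f μ) (hg : Integrable g μ)
    (hs : MeasurableSet[m] s) (hfg : ∀ x ∈ s, f x ≤ μ[g|m] x) :
    ∫ x in s, f x ∂μ ≤ ∫ x in s, g x ∂μ :=
  calc ∫ x in s, f x ∂μ ≤ ∫ x in s, μ[g|m] x ∂μ :=
        setIntegral_mono_on hf.integrableOn integrable_condExp.integrableOn (hm s hs) hfg
    _ = ∫ x in s, g x ∂μ := setIntegral_condExp hm hg hs

theorem setIntegral_le_setIntegral_posPart_add_sqrt_mul_sqrt [IsFiniteMeasure μ] (hm : m ≤ m0)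
    {f g : Ω → ℝ} {s : Set Ω} (hfm : Measurable[m] f) (hf : MemLp f 2 μ) (hg : Integrable g μ)
    (hs : MeasurableSet[m] s) :
    ∫ x in s, f x ∂μ ≤ ∫ x in s ∩ {x | f x ≤ μ[g|m] x}, max (g x) 0 ∂μ +
      √(∫ x, f x ^ 2 ∂μ) * √(μ.real {x | μ[g|m] x < f x}) := by
  have hcond : Measurable[m] (μ[g|m]) := stronglyMeasurable_condExp.measurable
  have hB : MeasurableSet[m] {x | f x ≤ μ[g|m] x} := measurableSet_le hfm hcond
  have hfi : Integrable f μ := hf.integrable one_le_two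
  rw [← integral_inter_add_sdiff (hm _ hB) hfi.integrableOn]
  gcongr ?_ + ?_
  · calc ∫ x in s ∩ {x | f x ≤ μ[g|m] x}, f x ∂μ
        ≤ ∫ x in s ∩ {x | f x ≤ μ[g|m] x}, g x ∂μ :=
          setIntegral_le_setIntegral_of_le_condExp hm hfi hg (hs.inter hB) fun x hx => hx.2
      _ ≤ ∫ x in s ∩ {x | f x ≤ μ[g|m] x}, max (g x) 0 ∂μ :=
          setIntegral_mono hg.integrableOn hg.pos_part.integrableOn fun x => le_max_left _ _
  · calc ∫ x in s \ {x | f x ≤ μ[g|m] x}, f x ∂μ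
        ≤ ∫ x in s \ {x | f x ≤ μ[g|m] x}, |f x| ∂μ :=
          setIntegral_mono hfi.integrableOn hfi.abs.integrableOn fun x => le_abs_self _
      _ ≤ ∫ x in {x | μ[g|m] x < f x}, |f x| ∂μ :=
          setIntegral_mono_set hfi.abs.integrableOn (ae_of_all _ fun x => abs_nonneg _)
            (ae_of_all _ fun x hx => not_le.mp hx.2)
      _ ≤ _ := setIntegral_abs_le_sqrt_integral_sq_mul_sqrt hf _

theorem setOf_condExp_lt_self_eq_empty (hm : m ≤ m0) [SigmaFinite (μ.trim hm)] {f : Ω → ℝ}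
    (hfm : StronglyMeasurable[m] f) (hf : Integrable f μ) : {x | μ[f|m] x < f x} = ∅ := by
  simp [condExp_of_stronglyMeasurable hm hfm hf]

theorem mul_measureReal_le_sum_setIntegral [IsFiniteMeasure μ] {ι : Type*} {t : Finset ι}
    {S : ι → Set Ω} {E : Set Ω} {f : ι → Ω → ℝ} {c : ℝ} (hc : 0 ≤ c)
    (hE : E ⊆ ⋃ i ∈ t, S i) (hS : ∀ i ∈ t, MeasurableSet (S i))
    (hf : ∀ i ∈ t, Integrable (f i) μ) (hcf : ∀ i ∈ t, ∀ x ∈ S i, c ≤ f i x) :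
    c * μ.real E ≤ ∑ i ∈ t, ∫ x in S i, f i x ∂μ :=
  calc c * μ.real E ≤ c * ∑ i ∈ t, μ.real (S i) :=
        mul_le_mul_of_nonneg_left
          ((measureReal_mono hE (measure_ne_top _ _)).trans (measureReal_biUnion_finset_le _ _)) hc
    _ = ∑ i ∈ t, c * μ.real (S i) := Finset.mul_sum _ _ _
    _ ≤ ∑ i ∈ t, ∫ x in S i, f i x ∂μ := Finset.sum_le_sum fun i hi =>
        setIntegral_ge_of_const_le_real (hS i hi) (measure_ne_top _ _) (hcf i hi)
          (hf i hi).integrableOn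

theorem sum_setIntegral_le_integral {ι : Type*} {t : Finset ι} {S : ι → Set Ω} {g : Ω → ℝ}
    (hg : Integrable g μ) (hg0 : 0 ≤ g) (hS : ∀ i ∈ t, MeasurableSet (S i))
    (hd : (t : Set ι).PairwiseDisjoint S) :
    ∑ i ∈ t, ∫ x in S i, g x ∂μ ≤ ∫ x, g x ∂μ := by
  rw [← integral_biUnion_finset t hS hd fun i _ => hg.integrableOn]
  exact setIntegral_le_integral hg (ae_of_all _ hg0)

end

section

variable {Ω β : Type*} {m0 : MeasurableSpace Ω}

theorem setOf_exists_mem_subset_biUnion_hittingBtwn (u : ℕ → Ω → β) (s : Set β) (a b : ℕ) :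
    {ω | ∃ n ∈ Finset.Icc a b, u n ω ∈ s} ⊆
      ⋃ n ∈ Finset.Icc a b, {ω | hittingBtwn u s a b ω = n ∧ u n ω ∈ s} := by
  rintro ω ⟨n, hn, hns⟩
  have h_exists : ∃ j ∈ Set.Icc a b, u j ω ∈ s := ⟨n, by simpa using hn, hns⟩
  refine Set.mem_biUnion (x := hittingBtwn u s a b ω) ?_ ⟨rfl, hittingBtwn_mem_set h_exists⟩
  exact Finset.mem_Icc.mpr ⟨le_hittingBtwn_of_exists h_exists, hittingBtwn_le ω⟩

theorem MeasureTheory.Adapted.measurableSet_hittingBtwn_eq_and_mem [MeasurableSpace β]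
    {ℱ : Filtration ℕ m0} {u : ℕ → Ω → β} (hu : Adapted ℱ u) {s : Set β}
    (hs : MeasurableSet s) (a b n : ℕ) :
    MeasurableSet[ℱ n] {ω | hittingBtwn u s a b ω = n ∧ u n ω ∈ s} := by
  have hτ := (hu.isStoppingTime_hittingBtwn (n := a) (n' := b) hs).measurableSet_eq n
  simp only [WithTop.coe_eq_coe] at hτ
  exact hτ.inter (hu n hs)

end

theorem stmt12_general {Ω : Type*} [m0 : MeasurableSpace Ω] (P : Measure Ω) [IsProbabilityMeasure P]
    (F : ℕ → MeasurableSpace Ω) (hle : ∀ n, F n ≤ m0) (hmono : Monotone F)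
    (M : ℕ → Ω → ℝ) (hadp : ∀ n, @Measurable Ω ℝ (F n) _ (M n))
    (hLp : ∀ n, MemLp (M n) 2 P)
    (lam : ℕ) (C : ℝ) (hC : 0 < C) :
    (P {x | ∃ n ∈ Finset.Icc 1 lam, C ≤ M n x}).toReal ≤
      (1 / C) * (∫ x, max (M lam x) 0 ∂P) +
        (1 / C) * ∑ n ∈ Finset.Icc 1 (lam - 1),
          Real.sqrt (∫ x, (M n x) ^ 2 ∂P) *
            Real.sqrt ((P {x | (P[M lam|F n]) x < M n x}).toReal) := by
  have hM : Adapted (⟨F, hmono, hle⟩ : Filtration ℕ m0) M := hadp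
  have hint : ∀ n, Integrable (M n) P := fun n => (hLp n).integrable one_le_two
  set A : ℕ → Set Ω := fun n => {ω | hittingBtwn M (Set.Ici C) 1 lam ω = n ∧ M n ω ∈ Set.Ici C}
  set B : ℕ → Set Ω := fun n => {ω | M n ω ≤ P[M lam|F n] ω}
  set K : ℕ → ℝ := fun n => √(∫ x, M n x ^ 2 ∂P) * √(P.real {x | P[M lam|F n] x < M n x})
  have hA : ∀ n, MeasurableSet[F n] (A n) :=
    hM.measurableSet_hittingBtwn_eq_and_mem measurableSet_Ici 1 lam
  have hAB : ∀ n, MeasurableSet (A n ∩ B n) := fun n => ((hle n _ (hA n)).inter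
    (hle n _ (measurableSet_le (hadp n) stronglyMeasurable_condExp.measurable)))
  have hK_lam : K lam = 0 := by
    simp [K, setOf_condExp_lt_self_eq_empty (hle lam) (hadp lam).stronglyMeasurable (hint lam)]
  suffices C * P.real {x | ∃ n ∈ Finset.Icc 1 lam, C ≤ M n x} ≤
      ∫ x, max (M lam x) 0 ∂P + ∑ n ∈ Finset.Icc 1 lam, K n by
    rw [Finset.sum_Icc_sub_one_right_of_eq_zero K hK_lam] at this
    rwa [← mul_add, one_div, inv_mul_eq_div, le_div_iff₀ hC, mul_comm]
  calc C * P.real {x | ∃ n ∈ Finset.Icc 1 lam, C ≤ M n x}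
      ≤ ∑ n ∈ Finset.Icc 1 lam, ∫ x in A n, M n x ∂P :=
        mul_measureReal_le_sum_setIntegral hC.le
          (setOf_exists_mem_subset_biUnion_hittingBtwn M (Set.Ici C) 1 lam)
          (fun n _ => hle n _ (hA n)) (fun n _ => hint n) fun n _ x hx => hx.2
    _ ≤ ∑ n ∈ Finset.Icc 1 lam, (∫ x in A n ∩ B n, max (M lam x) 0 ∂P + K n) :=
        Finset.sum_le_sum fun n _ => setIntegral_le_setIntegral_posPart_add_sqrt_mul_sqrt
          (hle n) (hadp n) (hLp n) (hint lam) (hA n)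
    _ ≤ ∫ x, max (M lam x) 0 ∂P + ∑ n ∈ Finset.Icc 1 lam, K n := by
        rw [Finset.sum_add_distrib]
        gcongr
        refine sum_setIntegral_le_integral (hint lam).pos_part (fun x => le_max_right _ _)
          (fun n _ => hAB n) fun i _ j _ hij => ?_
        exact Set.disjoint_left.mpr fun ω hi hj => hij (hi.1.1.symm.trans hj.1.1)

theorem stmt12 {Ω : Type*} [m0 : MeasurableSpace Ω] (P : Measure Ω) [IsProbabilityMeasure P]
    (F : ℕ → MeasurableSpace Ω) (hle : ∀ n, F n ≤ m0) (hmono : Monotone F)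
    (M : ℕ → Ω → ℝ) (hadp : ∀ n, @Measurable Ω ℝ (F n) _ (M n))
    (hLp : ∀ n, MemLp (M n) 2 P)
    (lam : ℕ) (hlam : 1 ≤ lam) (C : ℝ) (hC : 0 < C) :
    (P {x | ∃ n ∈ Finset.Icc 1 lam, C ≤ M n x}).toReal ≤
      (1 / C) * (∫ x, max (M lam x) 0 ∂P) +
        (1 / C) * ∑ n ∈ Finset.Icc 1 (lam - 1),
          Real.sqrt (∫ x, (M n x) ^ 2 ∂P) *
            Real.sqrt ((P {x | (P[M lam|F n]) x < M n x}).toReal) :=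
  stmt12_general (m0 := m0) P F hle hmono M hadp hLp lam C hC
end
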